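/- Let G be an infinite virtually cyclic group which is isomorphic to a semidirect product G₀ ⋊_θ ℤ/2 for some torsion-free group G₀ and homomorphism θ : ℤ/2 → Aut(G₀). Then G is isomorphic either to ℤ × ℤ/2 or to the infinite dihedral group ℤ ⋊ ℤ/2 (the semidirect product in which the generator of ℤ/2 acts on ℤ by negation). -/

import Mathlib

/-- The automorphism of `ℤ` (written multiplicatively) given by negation. -/
def negAutZ : MulAut (Multiplicative ℤ) := MulEquiv.inv (Multiplicative ℤ)

lemma negAutZ_sq : negAutZ ^ 2 = 1 := by
  ext z
  simp [negAutZ, pow_succ]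

/-- The action of `ℤ/2` on `ℤ` in which the generator acts by negation. -/
def dihedralTwist : Multiplicative (ZMod 2) →* MulAut (Multiplicative ℤ) where
  toFun a := negAutZ ^ (Multiplicative.toAdd a).val
  map_one' := by
    show negAutZ ^ (Multiplicative.toAdd (1 : Multiplicative (ZMod 2))).val = 1
    simp
  map_mul' x y := by
    show negAutZ ^ (Multiplicative.toAdd x + Multiplicative.toAdd y).val = _
    rw [ZMod.val_add, ← pow_eq_pow_mod _ negAutZ_sq, pow_add]

/-- The infinite dihedral group, as the semidirect product `ℤ ⋊ ℤ/2` where the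
generator of `ℤ/2` acts on `ℤ` by negation. -/
abbrev InfiniteDihedral : Type := Multiplicative ℤ ⋊[dihedralTwist] Multiplicative (ZMod 2)

/-- A witness that `G` is isomorphic to a semidirect product `G₀ ⋊ ℤ/2` with `G₀`
torsion-free. -/
structure TorsionFreeByZTwoWitness (G : Type) [Group G] where
  G₀ : Type
  [grp : Group G₀]
  θ : Multiplicative (ZMod 2) →* MulAut G₀
  torsionFree : ∀ g : G₀, g ≠ 1 → ¬IsOfFinOrder g
  iso : G ≃* (G₀ ⋊[θ] Multiplicative (ZMod 2))

/-!
Write `G ≅ G₀ ⋊ ℤ/2`. The torsion-free group `G₀` inherits a finite-index cyclic subgroup, hence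
a normal one `⟨g⟩`, and `g` is central: if `t g t⁻¹ = g ^ k` and `t ^ n = g ^ j` with `n` the index,
then conjugating `t ^ n` by `t` gives `k j = j`, while `j = 0` would make `t` torsion. So the centre
has finite index, the transfer `x ↦ x ^ [G₀ : Z(G₀)]` is an injective homomorphism into it and
`G₀` is abelian; then `x ↦ x ^ [G₀ : ⟨g⟩]` embeds `G₀` into `⟨g⟩`, so `G₀ ≅ ℤ`. Since
`Aut ℤ = {1, -1}`, the action of `ℤ/2` is trivial or by negation.
-/

def IsVirtuallyCyclic (G : Type*) [Group G] : Prop :=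
  ∃ H : Subgroup G, IsCyclic H ∧ H.FiniteIndex

open Subgroup

namespace IsVirtuallyCyclic

variable {G G' : Type*} [Group G] [Group G']

theorem comap_of_injective (hG : IsVirtuallyCyclic G) {f : G' →* G}
    (hf : Function.Injective f) : IsVirtuallyCyclic G' := by
  obtain ⟨H, hcyc, hfin⟩ := hG
  refine ⟨H.comap f, isCyclic_of_injective (f.subgroupComap H) fun x y hxy ↦ ?_,
    ⟨H.index_comap f ▸ isFiniteRelIndex_of_finiteIndex.relIndex_ne_zero⟩⟩
  exact Subtype.ext (hf (congrArg Subtype.val hxy))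

theorem exists_zpowers_normal_finiteIndex (hG : IsVirtuallyCyclic G) :
    ∃ g : G, (zpowers g).Normal ∧ (zpowers g).FiniteIndex := by
  obtain ⟨H, hcyc, hfin⟩ := hG
  have : IsCyclic H.normalCore := isCyclic_of_le H.normalCore_le
  obtain ⟨g, hg⟩ := H.normalCore.isCyclic_iff_exists_zpowers_eq_top.mp this
  exact ⟨g, hg ▸ H.normalCore_normal, hg ▸ H.finiteIndex_normalCore⟩

end IsVirtuallyCyclic

section TorsionFree

variable {G : Type*} [Group G]

theorem mem_center_of_zpowers_normal (htf : ∀ g : G, g ≠ 1 → ¬IsOfFinOrder g) {g : G}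
    [(zpowers g).Normal] [(zpowers g).FiniteIndex] : g ∈ center G := by
  refine mem_center_iff.mpr fun t ↦ ?_
  rw [← mul_inv_eq_iff_eq_mul]
  rcases eq_or_ne g 1 with rfl | hg
  · simp
  have hinj := injective_zpow_iff_not_isOfFinOrder.mpr (htf g hg)
  obtain ⟨k, hk⟩ := mem_zpowers_iff.mp (‹(zpowers g).Normal›.conj_mem g (mem_zpowers g) t)
  obtain ⟨j, hj⟩ := mem_zpowers_iff.mp ((zpowers g).pow_index_mem t)
  have hkj : g ^ (k * j) = g ^ j := by
    rw [zpow_mul, hk, conj_zpow, hj]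
    group
  rcases eq_or_ne j 0 with rfl | hj0
  · have ht : t = 1 := by
      by_contra ht
      refine htf t ht (isOfFinOrder_iff_pow_eq_one.mpr
        ⟨_, Nat.pos_of_ne_zero (FiniteIndex.index_ne_zero (H := zpowers g)), ?_⟩)
      rw [← hj, zpow_zero]
    simp [ht]
  · have hk1 : k = 1 := (mul_eq_right₀ hj0).mp (hinj hkj)
    rw [← hk, hk1, zpow_one]

theorem mul_comm_of_center_finiteIndex (htf : ∀ g : G, g ≠ 1 → ¬IsOfFinOrder g)
    [(center G).FiniteIndex] (a b : G) : a * b = b * a := by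
  have hinj : Function.Injective (MonoidHom.transferCenterPow G) := by
    rw [injective_iff_map_eq_one]
    intro x hx
    by_contra hx1
    refine htf x hx1 (isOfFinOrder_iff_pow_eq_one.mpr
      ⟨_, Nat.pos_of_ne_zero (FiniteIndex.index_ne_zero (H := center G)), ?_⟩)
    simpa [MonoidHom.transferCenterPow_apply] using congrArg Subtype.val hx
  apply hinj
  rw [map_mul, map_mul]
  exact Subtype.ext (mem_center_iff.mp (MonoidHom.transferCenterPow G b).2 _)

end TorsionFree

theorem isCyclic_of_zpowers_finiteIndex {G : Type*} [CommGroup G] [IsMulTorsionFree G] (g : G)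
    [(zpowers g).FiniteIndex] : IsCyclic G :=
  isCyclic_of_injective ((powMonoidHom (zpowers g).index).codRestrict (zpowers g)
    (zpowers g).pow_index_mem)
    fun _ _ h ↦ IsMulTorsionFree.pow_left_injective (FiniteIndex.index_ne_zero (H := zpowers g))
      (congrArg Subtype.val h)

theorem isCyclic_of_isVirtuallyCyclic {G : Type*} [Group G]
    (htf : ∀ g : G, g ≠ 1 → ¬IsOfFinOrder g) (hG : IsVirtuallyCyclic G) : IsCyclic G := by
  obtain ⟨g, hnormal, hfin⟩ := hG.exists_zpowers_normal_finiteIndex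
  have : (center G).FiniteIndex :=
    finiteIndex_of_le (H := zpowers g) (zpowers_le.mpr (mem_center_of_zpowers_normal htf))
  let : CommGroup G := { mul_comm := mul_comm_of_center_finiteIndex htf }
  have : IsMulTorsionFree G := .of_not_isOfFinOrder htf
  exact isCyclic_of_zpowers_finiteIndex g

theorem MulAut.int_eq_one_or_eq_negAutZ (σ : MulAut (Multiplicative ℤ)) :
    σ = 1 ∨ σ = negAutZ := by
  rcases Int.addEquiv_eq_refl_or_neg (AddEquiv.toMultiplicative.symm σ) with h | h
  · exact .inl <| MulEquiv.ext fun x ↦ by simpa using DFunLike.congr_fun h x.toAdd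
  · exact .inr <| MulEquiv.ext fun x ↦ Multiplicative.toAdd.injective <| by
      simpa [negAutZ] using DFunLike.congr_fun h x.toAdd

theorem MonoidHom.ext_zmod_two {M : Type*} [Monoid M] {f g : Multiplicative (ZMod 2) →* M}
    (h : f (.ofAdd 1) = g (.ofAdd 1)) : f = g := by
  refine MonoidHom.ext fun a ↦ ?_
  rcases (by decide : ∀ b : ZMod 2, b = 0 ∨ b = 1) a.toAdd with ha | ha
  · rw [← ofAdd_toAdd a, ha, ofAdd_zero, map_one, map_one]
  · rw [← ofAdd_toAdd a, ha, h]

theorem eq_one_or_eq_dihedralTwist (φ : Multiplicative (ZMod 2) →* MulAut (Multiplicative ℤ)) :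
    φ = 1 ∨ φ = dihedralTwist := by
  rcases MulAut.int_eq_one_or_eq_negAutZ (φ (.ofAdd 1)) with h | h
  · exact .inl (MonoidHom.ext_zmod_two h)
  · exact .inr (MonoidHom.ext_zmod_two (h.trans (pow_one negAutZ).symm))

theorem SemidirectProduct.infinite_left {N H : Type*} [Group N] [Group H] [Finite H]
    {φ : H →* MulAut N} [Infinite (N ⋊[φ] H)] : Infinite N := by
  by_contra hN
  have : Finite N := not_infinite_iff_finite.mp hN
  have : Finite (N ⋊[φ] H) := .of_equiv _ SemidirectProduct.equivProd.symm
  exact not_finite (N ⋊[φ] H)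

/-- an infinite virtually cyclic group which is isomorphic to a semidirect
product `G₀ ⋊ ℤ/2` with `G₀` torsion-free is isomorphic to `ℤ × ℤ/2` or to the infinite
dihedral group `ℤ ⋊ ℤ/2`. -/
theorem stmt_5 (G : Type) [Group G] [Infinite G]
    (hvc : ∃ H : Subgroup G, IsCyclic H ∧ H.FiniteIndex)
    (hw : Nonempty (TorsionFreeByZTwoWitness G)) :
    Nonempty (G ≃* Multiplicative ℤ × Multiplicative (ZMod 2)) ∨
      Nonempty (G ≃* InfiniteDihedral) := by
  obtain ⟨⟨G₀, θ, htf, iso⟩⟩ := hw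
  have : Infinite (G₀ ⋊[θ] Multiplicative (ZMod 2)) := .of_injective iso iso.injective
  have : Infinite G₀ := SemidirectProduct.infinite_left (φ := θ)
  have : IsCyclic G₀ := isCyclic_of_isVirtuallyCyclic htf <|
    IsVirtuallyCyclic.comap_of_injective hvc
      (f := iso.symm.toMonoidHom.comp SemidirectProduct.inl)
      (iso.symm.injective.comp SemidirectProduct.inl_injective)
  obtain ⟨φ, ⟨e⟩⟩ : ∃ φ, Nonempty (G ≃* Multiplicative ℤ ⋊[φ] Multiplicative (ZMod 2)) :=
    ⟨_, ⟨iso.trans (SemidirectProduct.congr' intCyclicMulEquiv.symm (.refl _))⟩⟩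
  rcases eq_one_or_eq_dihedralTwist φ with rfl | rfl
  · exact .inl ⟨e.trans SemidirectProduct.mulEquivProd⟩
  · exact .inr ⟨e⟩
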